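/- There exists a constant C > 0 such that for all geodesic rays ξ = (u_n)_{n≥0} and η = (v_n)_{n≥0} of the induced augmented tree of a Moran set, |Φ(ξ) − Φ(η)| ≤ C·r^{t(ξ,η)}, where t(ξ,η) = liminf_n ⟨u_n, v_n⟩ (with the convention r^∞ = 0). -/

import Mathlib

open Metric Set Filter

attribute [local instance] Classical.propDecidable

noncomputable section

namespace MoranPaper

/-- Points of `ℝ^d`. -/
abbrev Pt (d : ℕ) := EuclideanSpace ℝ (Fin d)

/-- `w` is an admissible word: the letter at (0-indexed) position `j`
(corresponding to step `j+1`) lies in `[1, n j]`, where `n j` encodes `n_{j+1}`. -/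
def IsWord (n : ℕ → ℕ) (w : List ℕ) : Prop :=
  ∀ j (h : j < w.length), 1 ≤ w.get ⟨j, h⟩ ∧ w.get ⟨j, h⟩ ≤ n j

/-- The set `D_k` of words of length `k`. -/
def WordsLen (n : ℕ → ℕ) (k : ℕ) : Set (List ℕ) := {w | IsWord n w ∧ w.length = k}

/-- A Moran structure on the data `(J, (n_k), (r_k))`:  a family of sets `J_w`
indexed by words, with `J_∅ = J`, each `J_w` a similar copy of `J`, children
contained in the parent with pairwise disjoint interiors, and prescribed
diameter ratios. -/
structure MoranStructure (d : ℕ) (J : Set (Pt d)) (n : ℕ → ℕ) (r : ℕ → ℝ) where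
  Jset : List ℕ → Set (Pt d)
  root_eq : Jset [] = J
  similar : ∀ w, IsWord n w → ∃ (S : Pt d → Pt d) (c : ℝ), 0 < c ∧
      (∀ x y, dist (S x) (S y) = c * dist x y) ∧ Jset w = S '' J
  nested : ∀ w, IsWord n w → ∀ a, 1 ≤ a → a ≤ n w.length →
      Jset (w ++ [a]) ⊆ Jset w
  disjoint_int : ∀ w, IsWord n w → ∀ a b, 1 ≤ a → a ≤ n w.length →
      1 ≤ b → b ≤ n w.length → a ≠ b →
      interior (Jset (w ++ [a])) ∩ interior (Jset (w ++ [b])) = ∅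
  diam_ratio : ∀ w, IsWord n w → ∀ a, 1 ≤ a → a ≤ n w.length →
      Metric.diam (Jset (w ++ [a])) = r w.length * Metric.diam (Jset w)

/-- Standing hypotheses on the Moran data; `R` plays the role of `r = inf_k r_k > 0`. -/
structure MoranData (d : ℕ) (J : Set (Pt d)) (n : ℕ → ℕ) (r : ℕ → ℝ) (R : ℝ) : Prop where
  dim_pos : 1 ≤ d
  compact : IsCompact J
  int_nonempty : (interior J).Nonempty
  two_le : ∀ k, 2 ≤ n k
  r_pos : ∀ k, 0 < r k
  r_lt_one : ∀ k, r k < 1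
  nr_le : ∀ k, (n k : ℝ) * r k ≤ 1
  R_pos : 0 < R
  R_inf : R = ⨅ k, r k

/-- The Moran set `E = ⋂_k ⋃_{w ∈ D_k} J_w`. -/
def MoranSet {d : ℕ} {J : Set (Pt d)} {n : ℕ → ℕ} {r : ℕ → ℝ}
    (M : MoranStructure d J n r) : Set (Pt d) :=
  ⋂ k, ⋃ w ∈ WordsLen n k, M.Jset w

/-- The product `r_1 ⋯ r_k`. -/
def prodR (r : ℕ → ℝ) (k : ℕ) : ℝ := ∏ j ∈ Finset.range k, r j

/-- The level `X_m`:  `X_0 = {∅}`, and for `m ≥ 1`,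
`X_m = {w : r_1⋯r_k ≤ R^m < r_1⋯r_{k-1}}` where `k` is the length of `w`. -/
def XLevel (n : ℕ → ℕ) (r : ℕ → ℝ) (R : ℝ) (m : ℕ) : Set (List ℕ) :=
  if m = 0 then {([] : List ℕ)}
  else {w | IsWord n w ∧ prodR r w.length ≤ R ^ m ∧ R ^ m < prodR r (w.length - 1)}

/-- The vertex set `X = ⋃_m X_m`. -/
def XV (n : ℕ → ℕ) (r : ℕ → ℝ) (R : ℝ) : Set (List ℕ) := ⋃ m, XLevel n r R m

/-- `v` is the parent (first ancestor) of `u`:  `v` is the initial segment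
of `u` lying one level above `u`. -/
def IsParent (n : ℕ → ℕ) (r : ℕ → ℝ) (R : ℝ) (v u : List ℕ) : Prop :=
  v ≠ u ∧ v <+: u ∧ ∃ m, 1 ≤ m ∧ u ∈ XLevel n r R m ∧ v ∈ XLevel n r R (m - 1)

/-- Vertical edge relation `𝔈_v` (as an unordered relation). -/
def Evert (n : ℕ → ℕ) (r : ℕ → ℝ) (R : ℝ) (u v : List ℕ) : Prop :=
  IsParent n r R u v ∨ IsParent n r R v u

variable {d : ℕ} {J : Set (Pt d)} {n : ℕ → ℕ} {r : ℕ → ℝ}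

/-- Horizontal edge relation `𝔈_h`: distinct words on a common level `X_m`, `m ≥ 1`,
whose Moran pieces intersect. -/
def Ehor (M : MoranStructure d J n r) (R : ℝ) (u v : List ℕ) : Prop :=
  u ≠ v ∧ ∃ m, 1 ≤ m ∧ u ∈ XLevel n r R m ∧ v ∈ XLevel n r R m ∧
    (M.Jset u ∩ M.Jset v).Nonempty

/-- The induced augmented tree `(X, 𝔈)`, `𝔈 = 𝔈_v ∪ 𝔈_h`, as a graph on all words
(words outside `X` are isolated vertices). -/
def AugGraph (M : MoranStructure d J n r) (R : ℝ) : SimpleGraph (List ℕ) where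
  Adj u v := Evert n r R u v ∨ Ehor M R u v
  symm := ⟨by
    rintro u v (h | ⟨hne, m, hm, hu, hv, hJ⟩)
    · exact Or.inl h.symm
    · exact Or.inr ⟨hne.symm, m, hm, hv, hu, by rwa [Set.inter_comm]⟩⟩
  loopless := ⟨by
    rintro u ((⟨h, -⟩ | ⟨h, -⟩) | ⟨h, -⟩) <;> exact h rfl⟩

/-- The tree `(X, 𝔈_v)` with only the vertical edges. -/
def TreeGraph (n : ℕ → ℕ) (r : ℕ → ℝ) (R : ℝ) : SimpleGraph (List ℕ) where
  Adj u v := Evert n r R u v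
  symm := ⟨fun _ _ h => h.symm⟩
  loopless := ⟨by rintro u (⟨h, -⟩ | ⟨h, -⟩) <;> exact h rfl⟩

/-- The graph `(X, 𝔈_h)` with only the horizontal edges. -/
def HorGraph (M : MoranStructure d J n r) (R : ℝ) : SimpleGraph (List ℕ) where
  Adj u v := Ehor M R u v
  symm := ⟨by
    rintro u v ⟨hne, m, hm, hu, hv, hJ⟩
    exact ⟨hne.symm, m, hm, hv, hu, by rwa [Set.inter_comm]⟩⟩
  loopless := ⟨by rintro u ⟨h, -⟩; exact h rfl⟩

/-- Gromov product `⟨x,y⟩ = (d(o,x) + d(o,y) - d(x,y))/2` with respect to a base point `o`. -/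
def gromovD {V : Type*} (G : SimpleGraph V) (o x y : V) : ℝ :=
  ((G.dist o x : ℝ) + (G.dist o y : ℝ) - (G.dist x y : ℝ)) / 2

/-- Condition (H): there is `C' > 0` such that on every level `X_m` (`m ≥ 1`),
two pieces either intersect or are at distance at least `C' R^m`. -/
def CondH (M : MoranStructure d J n r) (R : ℝ) : Prop :=
  ∃ C' : ℝ, 0 < C' ∧ ∀ m, 1 ≤ m → ∀ u ∈ XLevel n r R m, ∀ v ∈ XLevel n r R m,
    (M.Jset u ∩ M.Jset v).Nonempty ∨
    ∀ p ∈ M.Jset u, ∀ q ∈ M.Jset v, C' * R ^ m ≤ dist p q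

/-- `T` is a horizontal connected component: a maximal subset of some level `X_m`
which is connected in the horizontal graph. -/
def IsHCC (M : MoranStructure d J n r) (R : ℝ) (T : Set (List ℕ)) : Prop :=
  ∃ m, T ⊆ XLevel n r R m ∧ ((HorGraph M R).induce T).Connected ∧
    ∀ T', T ⊆ T' → T' ⊆ XLevel n r R m → ((HorGraph M R).induce T').Connected → T' = T

/-- The common suffix set `Σ_m` of the level `X_m`: words `w` with `uw ∈ X_{m+1}`
for (some, equivalently all) `u ∈ X_m`. -/
def SigmaSet (n : ℕ → ℕ) (r : ℕ → ℝ) (R : ℝ) (m : ℕ) : Set (List ℕ) :=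
  {w | ∃ u ∈ XLevel n r R m, u ++ w ∈ XLevel n r R (m + 1)}

/-- The offspring set `TΣ_m ⊆ X_{m+1}` of a set `T ⊆ X_m`. -/
def TSigma (n : ℕ → ℕ) (r : ℕ → ℝ) (R : ℝ) (m : ℕ) (T : Set (List ℕ)) : Set (List ℕ) :=
  {x | ∃ u ∈ T, ∃ w ∈ SigmaSet n r R m, x = u ++ w}

/-- The augmented tree is rearrangeable:  horizontal connected components have
uniformly bounded cardinality, and for every horizontal connected component `T ⊆ X_m`
with `#T = b`, the offspring set `TΣ_m` can be partitioned into `b` groups (indexed by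
the elements of `T`), each group being a union of horizontal connected components and
having exactly `#Σ_m` elements. -/
def Rearrangeable (M : MoranStructure d J n r) (R : ℝ) : Prop :=
  (∃ L : ℕ, ∀ T, IsHCC M R T → T.Finite ∧ T.ncard ≤ L) ∧
  ∀ m T, T ⊆ XLevel n r R m → IsHCC M R T →
    ∃ g : List ℕ → List ℕ,
      (∀ x ∈ TSigma n r R m T, g x ∈ T) ∧
      (∀ Z, IsHCC M R Z → Z ⊆ TSigma n r R m T → ∀ x ∈ Z, ∀ y ∈ Z, g x = g y) ∧
      (∀ i ∈ T, {x ∈ TSigma n r R m T | g x = i}.ncard = (SigmaSet n r R m).ncard)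

/-- `C` is a (topological) connected component of `A`. -/
def IsRelCC {α : Type*} [TopologicalSpace α] (C A : Set α) : Prop :=
  ∃ x ∈ A, C = connectedComponentIn A x

/-- Condition (v): there is `L` such that any `T ⊆ D_{k-1}` for which `⋃_{i∈T} J_i`
is a connected component of `⋃_{i∈D_{k-1}} J_i` satisfies `#T ≤ L`. -/
def CondV (M : MoranStructure d J n r) : Prop :=
  ∃ L : ℕ, ∀ k, 1 ≤ k → ∀ T ⊆ WordsLen n (k - 1),
    IsRelCC (⋃ i ∈ T, M.Jset i) (⋃ i ∈ WordsLen n (k - 1), M.Jset i) →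
    T.Finite ∧ T.ncard ≤ L

/-- Condition (vi): for any such `T` (with `#T = b`), the connected components of
`⋃_{i∈T} ⋃_{j=1}^{n_k} J_{ij}` can be partitioned into `b` groups (indexed by the
elements of `T`) so that the union of the components in each group is a union of
exactly `n_k` of the sets `J_{ij}`. -/
def CondVI (M : MoranStructure d J n r) : Prop :=
  ∀ k, 1 ≤ k → ∀ T ⊆ WordsLen n (k - 1),
    IsRelCC (⋃ i ∈ T, M.Jset i) (⋃ i ∈ WordsLen n (k - 1), M.Jset i) →
    ∃ f : Set (Pt d) → List ℕ,
      (∀ C, IsRelCC C (⋃ u ∈ T, ⋃ j ∈ Set.Icc 1 (n (k - 1)), M.Jset (u ++ [j])) → f C ∈ T) ∧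
      ∀ i ∈ T, ∃ W : Finset (List ℕ × ℕ),
        (∀ p ∈ W, p.1 ∈ T ∧ 1 ≤ p.2 ∧ p.2 ≤ n (k - 1)) ∧
        W.card = n (k - 1) ∧
        (⋃ C ∈ {C | IsRelCC C (⋃ u ∈ T, ⋃ j ∈ Set.Icc 1 (n (k - 1)), M.Jset (u ++ [j]))
            ∧ f C = i}, C)
          = ⋃ p ∈ W, M.Jset (p.1 ++ [p.2])

/-- A geodesic ray of the induced augmented tree: `u_m ∈ X_m` and `u_m = (u_{m+1})⁻¹`. -/
def IsRay (n : ℕ → ℕ) (r : ℕ → ℝ) (R : ℝ) (u : ℕ → List ℕ) : Prop :=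
  (∀ m, u m ∈ XLevel n r R m) ∧ ∀ m, IsParent n r R (u m) (u (m + 1))

/-- Geodesic rays as a type. -/
def MRay (n : ℕ → ℕ) (r : ℕ → ℝ) (R : ℝ) := {u : ℕ → List ℕ // IsRay n r R u}

/-- `t(ξ,η) = liminf_m ⟨u_m, v_m⟩`, valued in `EReal`. -/
def tLim {V : Type*} (G : SimpleGraph V) (o : V) (u v : ℕ → V) : EReal :=
  Filter.liminf (fun m => ((gromovD G o (u m) (v m) : ℝ) : EReal)) Filter.atTop

/-- `R ^ t` for `t ∈ EReal`, with the convention `R ^ ∞ = 0`. -/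
def rpowE (R : ℝ) (t : EReal) : ℝ := if t = ⊤ then 0 else R ^ t.toReal

/-- The hyperbolic boundary of the induced augmented tree: equivalence classes of
geodesic rays, two rays being equivalent when `t(ξ,η) = ∞`. -/
def MBoundary (M : MoranStructure d J n r) (R : ℝ) :=
  Quot (fun ξ η : MRay n r R => tLim (AugGraph M R) [] ξ.1 η.1 = ⊤)

/-- The class of a ray in the hyperbolic boundary. -/
def mkB (M : MoranStructure d J n r) (R : ℝ) (ξ : MRay n r R) : MBoundary M R :=
  Quot.mk _ ξ

/-- The metric `ρ_a` on the hyperbolic boundary: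
`ρ_a(ξ̄,η̄) = exp(-a · inf{t(ξ,η) : ξ ∈ ξ̄, η ∈ η̄})` for distinct classes, and `0` otherwise. -/
def mrho (M : MoranStructure d J n r) (R a : ℝ) (p q : MBoundary M R) : ℝ :=
  if p = q then 0
  else Real.exp (-a * (sInf {s : EReal | ∃ ξ η : MRay n r R,
    mkB M R ξ = p ∧ mkB M R η = q ∧ s = tLim (AugGraph M R) [] ξ.1 η.1}).toReal)

/-- An abstract augmented tree in the sense of Kaimanovich: a rooted tree (encoded
by a parent map and a level function) together with a symmetric horizontal edge
relation `Eh` joining distinct vertices of a common level whose parents are equal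
or horizontally joined. -/
structure AugmentedTree (V : Type*) where
  root : V
  parent : V → V
  lvl : V → ℕ
  lvl_root : lvl root = 0
  lvl_parent : ∀ x, x ≠ root → lvl (parent x) + 1 = lvl x
  Eh : V → V → Prop
  Eh_symm : ∀ x y, Eh x y → Eh y x
  Eh_ne : ∀ x y, Eh x y → x ≠ y
  Eh_lvl : ∀ x y, Eh x y → lvl x = lvl y
  Eh_parent : ∀ x y, Eh x y → parent x = parent y ∨ Eh (parent x) (parent y)

namespace AugmentedTree

variable {V : Type*} (T : AugmentedTree V)

/-- The vertical (tree) edge relation. -/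
def Ev (x y : V) : Prop :=
  (x ≠ T.root ∧ T.parent x = y) ∨ (y ≠ T.root ∧ T.parent y = x)

/-- The graph `(X, 𝔈)`, `𝔈 = 𝔈_v ∪ 𝔈_h`. -/
def graph : SimpleGraph V where
  Adj x y := x ≠ y ∧ (T.Ev x y ∨ T.Eh x y)
  symm := ⟨by
    rintro x y ⟨hne, h | h⟩
    · exact ⟨hne.symm, Or.inl h.symm⟩
    · exact ⟨hne.symm, Or.inr (T.Eh_symm x y h)⟩⟩
  loopless := ⟨fun _ h => h.1 rfl⟩

/-- Gromov product `⟨x,y⟩ = (|x| + |y| - d(x,y))/2` (one has `d(o,x) = |x| = lvl x`). -/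
def gromov (x y : V) : ℝ :=
  ((T.lvl x : ℝ) + (T.lvl y : ℝ) - (T.graph.dist x y : ℝ)) / 2

/-- Gromov hyperbolicity. -/
def Hyperbolic : Prop :=
  ∃ δ : ℝ, 0 ≤ δ ∧ ∀ x y z : V,
    min (T.gromov x z) (T.gromov z y) - δ ≤ T.gromov x y

/-- A geodesic ray from the root: `x_0 = o` and `x_m = (x_{m+1})⁻¹`. -/
def IsRayT (x : ℕ → V) : Prop := x 0 = T.root ∧ ∀ m, T.parent (x (m + 1)) = x m

/-- Geodesic rays from the root, as a type. -/
def Ray := {x : ℕ → V // T.IsRayT x}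

/-- `t(ξ,η) = liminf_m ⟨x_m, y_m⟩`, valued in `EReal`. -/
def tvalT (ξ η : T.Ray) : EReal :=
  Filter.liminf (fun m => ((T.gromov (ξ.1 m) (η.1 m) : ℝ) : EReal)) Filter.atTop

/-- The hyperbolic boundary: classes of geodesic rays, two rays being equivalent
when `t(ξ,η) = ∞`. -/
def Boundary := Quot (fun ξ η : T.Ray => T.tvalT ξ η = ⊤)

/-- The class of a ray in the boundary. -/
def mkBd (ξ : T.Ray) : T.Boundary := Quot.mk _ ξ

/-- The metric `ρ_a` on the hyperbolic boundary. -/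
def rho (a : ℝ) (p q : T.Boundary) : ℝ :=
  if p = q then 0
  else Real.exp (-a * (sInf {s : EReal | ∃ ξ η : T.Ray,
    T.mkBd ξ = p ∧ T.mkBd η = q ∧ s = T.tvalT ξ η}).toReal)

end AugmentedTree

end MoranPaper

end

/-! Every piece `J_w` with `w ∈ X_m` has diameter at most `diam J · R^m`, and the pieces at the
two ends of an edge of the augmented tree intersect. A walk of length `ℓ` from level `m_a` to
level `m_b` never gets closer to the root than level `(m_a + m_b - ℓ) / 2`, so chaining the
pieces along it bounds the distance between points of its end pieces by a geometric series of
size `O(R^((m_a + m_b - ℓ) / 2))`. For a geodesic from `u_m` to `v_m` this exponent is the Gromov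
product `⟨u_m, v_m⟩`, and since `R < 1` the bound passes to `R^(liminf ⟨u_m, v_m⟩)`. -/

open scoped Topology

namespace MoranPaper

section ShrinkingPieces

variable {V X : Type*} [PseudoMetricSpace X]

/-- `S` is the set of vertices that carry a genuine piece; it contains every non-isolated
vertex. -/
structure IsShrinkingPieces (G : SimpleGraph V) (S : Set V) (lvl : V → ℕ) (P : V → Set X)
    (D R : ℝ) : Prop where
  mem_of_adj : ∀ a c, G.Adj a c → c ∈ S
  level_le_of_adj : ∀ a c, G.Adj a c → lvl c ≤ lvl a + 1
  nonempty_inter_of_adj : ∀ a c, G.Adj a c → (P a ∩ P c).Nonempty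
  dist_le : ∀ a ∈ S, ∀ x ∈ P a, ∀ y ∈ P a, dist x y ≤ D * R ^ lvl a

variable {G : SimpleGraph V} {S : Set V} {lvl : V → ℕ} {P : V → Set X} {D R : ℝ}

theorem IsShrinkingPieces.level_le_add_length (hP : IsShrinkingPieces G S lvl P D R)
    {a b : V} (p : G.Walk a b) : lvl b ≤ lvl a + p.length := by
  induction p with
  | nil => simp
  | cons h _ ih =>
    have := hP.level_le_of_adj _ _ h
    rw [SimpleGraph.Walk.length_cons]
    omega

/-- The inductive step of `IsShrinkingPieces.dist_le_of_walk`, for an edge from level `ma` to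
level `mc`. The correction term `K' s^(2 ma)` pays for the steps towards the root, where the
pieces grow; `h_up`, `h_hor` and `h_down` are what the three kinds of steps need. -/
theorem walk_bound_step {s D K K' : ℝ} (hD : 0 ≤ D) (hs0 : 0 < s) (hs1 : s < 1)
    (hK' : 0 ≤ K') (h_up : (D + K') * s ^ 2 ≤ K') (h_hor : D ≤ K * (1 - s))
    (h_down : D + K' ≤ K * (1 - s ^ 2)) {ma mc : ℕ} {f : ℤ} (hca : mc ≤ ma + 1)
    (hac : ma ≤ mc + 1) (hf : f + 1 ≤ ma + mc) :
    D * s ^ (2 * (ma : ℤ)) + (K * s ^ (f + 1 + mc - ma) - K' * s ^ (2 * (mc : ℤ))) ≤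
      K * s ^ f - K' * s ^ (2 * (ma : ℤ)) := by
  have hK : 0 ≤ K := by nlinarith
  have hF : 0 < s ^ f := zpow_pos hs0 f
  have hshift : ∀ (g : ℤ) (k : ℕ), s ^ (g + k) = s ^ g * s ^ k := fun g k => by
    rw [zpow_add₀ hs0.ne', zpow_natCast]
  obtain hhor | hup | hdown : mc = ma ∨ ma = mc + 1 ∨ mc = ma + 1 := by omega
  · subst hhor
    rw [show f + 1 + mc - mc = f + (1 : ℕ) by ring, hshift, pow_one]
    have hA : s ^ (2 * (mc : ℤ)) ≤ s ^ f * s := by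
      have := zpow_le_zpow_right_of_le_one₀ hs0 hs1.le (show f + (1 : ℕ) ≤ 2 * (mc : ℤ) by omega)
      rwa [hshift, pow_one] at this
    nlinarith [mul_le_mul_of_nonneg_left h_hor hF.le, mul_le_mul_of_nonneg_left hA hD,
      mul_nonneg (mul_nonneg hD hF.le) (sub_nonneg.2 hs1.le)]
  · subst hup
    rw [show f + 1 + mc - ((mc + 1 : ℕ) : ℤ) = f by push_cast; ring,
      show 2 * ((mc + 1 : ℕ) : ℤ) = 2 * mc + (2 : ℕ) by push_cast; ring, hshift]
    nlinarith [mul_le_mul_of_nonneg_right h_up (zpow_pos hs0 (2 * (mc : ℤ))).le]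
  · subst hdown
    rw [show f + 1 + ((ma + 1 : ℕ) : ℤ) - ma = f + (2 : ℕ) by push_cast; ring,
      show 2 * ((ma + 1 : ℕ) : ℤ) = 2 * ma + (2 : ℕ) by push_cast; ring, hshift, hshift]
    have hA : s ^ (2 * (ma : ℤ)) ≤ s ^ f := zpow_le_zpow_right_of_le_one₀ hs0 hs1.le (by omega)
    have hA0 := zpow_pos hs0 (2 * (ma : ℤ))
    nlinarith [mul_le_mul_of_nonneg_left hA (by nlinarith : 0 ≤ K * (1 - s ^ 2)),
      mul_le_mul_of_nonneg_right h_down hA0.le, mul_nonneg hK' (mul_nonneg hA0.le (sq_nonneg s))]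

theorem IsShrinkingPieces.dist_le_of_walk {s K K' : ℝ}
    (hP : IsShrinkingPieces G S lvl P D (s ^ 2)) (hD : 0 ≤ D) (hs0 : 0 < s) (hs1 : s < 1)
    (hK' : 0 ≤ K') (h_up : (D + K') * s ^ 2 ≤ K') (h_hor : D ≤ K * (1 - s))
    (h_down : D + K' ≤ K * (1 - s ^ 2))
    {a b : V} (p : G.Walk a b) (ha : a ∈ S) {x y : X} (hx : x ∈ P a) (hy : y ∈ P b) :
    dist x y ≤ K * s ^ ((lvl a : ℤ) + lvl b - p.length) - K' * s ^ (2 * (lvl a : ℤ)) := by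
  have hpow : ∀ m : ℕ, (s ^ 2) ^ m = s ^ (2 * (m : ℤ)) := fun m => by
    rw [← pow_mul, ← zpow_natCast]; push_cast; rfl
  induction p generalizing x with
  | @nil a =>
    have hxy := hP.dist_le _ ha x hx y hy
    rw [hpow] at hxy
    rw [SimpleGraph.Walk.length_nil, Nat.cast_zero, sub_zero, ← two_mul]
    have hA := (zpow_pos hs0 (2 * (lvl a : ℤ))).le
    nlinarith [mul_le_mul_of_nonneg_right h_down hA,
      mul_nonneg (mul_nonneg (show 0 ≤ K by nlinarith) (sq_nonneg s)) hA]
  | @cons a c b h q ih =>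
    obtain ⟨z, hza, hzc⟩ := hP.nonempty_inter_of_adj _ _ h
    have hxz := hP.dist_le _ ha x hx z hza
    rw [hpow] at hxz
    have hzy := ih (hP.mem_of_adj _ _ h) hzc hy
    rw [show (lvl c : ℤ) + lvl b - q.length =
      ((lvl a : ℤ) + lvl b - (q.length + 1 : ℕ)) + 1 + lvl c - lvl a by push_cast; ring] at hzy
    have hstep := walk_bound_step hD hs0 hs1 hK' h_up h_hor h_down (hP.level_le_of_adj _ _ h)
      (hP.level_le_of_adj _ _ h.symm) (f := (lvl a : ℤ) + lvl b - (q.length + 1 : ℕ))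
      (by have := hP.level_le_add_length q; push_cast; omega)
    rw [SimpleGraph.Walk.length_cons]
    linarith [dist_triangle x z y]

theorem IsShrinkingPieces.exists_dist_le_mul_rpow_gromovD
    (hP : IsShrinkingPieces G S lvl P D R) (hD : 0 < D) (hR0 : 0 < R) (hR1 : R < 1) (o : V) :
    ∃ C, 0 < C ∧ ∀ a b, a ∈ S → G.Reachable a b → lvl a = G.dist o a → lvl b = G.dist o b →
      ∀ x ∈ P a, ∀ y ∈ P b, dist x y ≤ C * R ^ gromovD G o a b := by
  set s := √R
  have hs0 : 0 < s := Real.sqrt_pos.2 hR0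
  have hs1 : s < 1 := (Real.sqrt_lt' one_pos).2 (by rwa [one_pow])
  have hss : s ^ 2 = R := Real.sq_sqrt hR0.le
  have h1s : 0 < 1 - s := by linarith
  have h1s2 : 0 < 1 - s ^ 2 := by nlinarith
  refine ⟨D / (1 - s) ^ 2, by positivity, fun a b ha hab hla hlb x hx y hy => ?_⟩
  obtain ⟨p, hp⟩ := hab.exists_walk_length_eq_dist
  have hwalk := (hss ▸ hP).dist_le_of_walk (K := D / (1 - s) ^ 2)
    (K' := D * s ^ 2 / (1 - s ^ 2)) hD.le hs0 hs1
    (by positivity) (by field_simp; linarith) (by field_simp; nlinarith)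
    (by field_simp; nlinarith) p ha hx hy
  have hgromov : R ^ gromovD G o a b = s ^ ((lvl a : ℤ) + lvl b - p.length) := by
    rw [gromovD, ← hla, ← hlb, ← hp, ← hss, ← Real.rpow_natCast, ← Real.rpow_mul hs0.le,
      ← Real.rpow_intCast]
    push_cast
    ring_nf
  rw [hgromov]
  have hK' : 0 ≤ D * s ^ 2 / (1 - s ^ 2) * s ^ (2 * (lvl a : ℤ)) := by positivity
  linarith

end ShrinkingPieces

theorem le_mul_rpowE_liminf {R c K : ℝ} (hR0 : 0 < R) (hR1 : R < 1) (hK : 0 ≤ K) {g : ℕ → ℝ}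
    (hg : ∀ m, 0 ≤ g m) (h : ∀ m, c ≤ K * R ^ g m) :
    c ≤ K * rpowE R (liminf (fun m => (g m : EReal)) atTop) := by
  set t := liminf (fun m => (g m : EReal)) atTop
  have h_below : ∀ τ : ℝ, (τ : EReal) < t → c ≤ K * R ^ τ := fun τ hτ => by
    obtain ⟨m, hm⟩ := (eventually_lt_of_lt_liminf hτ).exists
    exact (h m).trans (mul_le_mul_of_nonneg_left
      (Real.rpow_le_rpow_of_exponent_ge hR0 hR1.le (EReal.coe_lt_coe_iff.1 hm).le) hK)
  have hcont : Continuous fun τ : ℝ => K * R ^ τ :=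
    continuous_const.mul (Real.continuous_const_rpow hR0.ne')
  by_cases ht : t = ⊤
  · rw [rpowE, if_pos ht]
    exact ge_of_tendsto ((tendsto_rpow_atTop_of_base_lt_one R (by linarith) hR1).const_mul K)
      (Eventually.of_forall fun τ => h_below τ (ht ▸ EReal.coe_lt_top τ))
  · have ht0 : (0 : EReal) ≤ t := le_liminf_of_le (by isBoundedDefault)
      (Eventually.of_forall fun m => EReal.coe_nonneg.2 (hg m))
    have hteq : ((t.toReal : ℝ) : EReal) = t := EReal.coe_toReal ht (ht0.trans_lt' (by simp)).ne'
    rw [rpowE, if_neg ht]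
    have h_left : ∀ᶠ τ in 𝓝[<] t.toReal, c ≤ K * R ^ τ :=
      eventually_nhdsWithin_of_forall fun τ hτ => h_below τ (hteq ▸ EReal.coe_lt_coe_iff.2 hτ)
    exact ge_of_tendsto (hcont.continuousAt.tendsto.mono_left nhdsWithin_le_nhds) h_left

section Moran

variable {d : ℕ} {J : Set (Pt d)} {n : ℕ → ℕ} {r : ℕ → ℝ} {R : ℝ}

theorem MoranData.R_le (hD : MoranData d J n r R) (k : ℕ) : R ≤ r k := by
  rw [hD.R_inf]
  exact ciInf_le ⟨0, by rintro _ ⟨j, rfl⟩; exact (hD.r_pos j).le⟩ k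

theorem MoranData.R_lt_one (hD : MoranData d J n r R) : R < 1 :=
  (hD.R_le 0).trans_lt (hD.r_lt_one 0)

theorem mem_xLevel_zero {w : List ℕ} : w ∈ XLevel n r R 0 ↔ w = [] := by
  simp [XLevel]

theorem mem_xLevel_of_ne_zero {w : List ℕ} {m : ℕ} (hm : m ≠ 0) :
    w ∈ XLevel n r R m ↔
      IsWord n w ∧ prodR r w.length ≤ R ^ m ∧ R ^ m < prodR r (w.length - 1) := by
  simp [XLevel, hm]

theorem isWord_of_mem_xLevel {w : List ℕ} {m : ℕ} (hw : w ∈ XLevel n r R m) : IsWord n w := by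
  rcases eq_or_ne m 0 with rfl | hm
  · rw [mem_xLevel_zero.1 hw]; intro j hj; simp at hj
  · exact ((mem_xLevel_of_ne_zero hm).1 hw).1

theorem prodR_le_pow_of_mem_xLevel {w : List ℕ} {m : ℕ} (hw : w ∈ XLevel n r R m) :
    prodR r w.length ≤ R ^ m := by
  rcases eq_or_ne m 0 with rfl | hm
  · simp [mem_xLevel_zero.1 hw, prodR]
  · exact ((mem_xLevel_of_ne_zero hm).1 hw).2.1

/-- A word `w` of length `k + 1` in `X_m` has `r_1 ⋯ r_{k+1} > R^m · R ≥ R^m'` for `m' > m`. -/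
theorem eq_of_mem_xLevel (hD : MoranData d J n r R) {w : List ℕ} {m m' : ℕ}
    (hm : w ∈ XLevel n r R m) (hm' : w ∈ XLevel n r R m') : m = m' := by
  wlog hlt : m < m' generalizing m m'
  · rcases (not_lt.1 hlt).lt_or_eq with h | h
    · exact (this hm' hm h).symm
    · exact h.symm
  exfalso
  have hle := prodR_le_pow_of_mem_xLevel hm'
  have hpow : R ^ m' ≤ R ^ (m + 1) := pow_le_pow_of_le_one hD.R_pos.le hD.R_lt_one.le hlt
  rcases eq_or_ne m 0 with rfl | h0
  · rw [mem_xLevel_zero.1 hm] at hle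
    have : R ^ m' < 1 := pow_lt_one₀ hD.R_pos.le hD.R_lt_one (by omega)
    simp [prodR] at hle
    linarith
  · obtain ⟨-, hm1, hm2⟩ := (mem_xLevel_of_ne_zero h0).1 hm
    obtain ⟨k, hk⟩ : ∃ k, w.length = k + 1 := Nat.exists_eq_succ_of_ne_zero fun h => by
      simp [h] at hm1 hm2; linarith
    rw [hk, Nat.add_sub_cancel] at hm2
    rw [hk, prodR, Finset.prod_range_succ, ← prodR] at hle
    have hprod : 0 ≤ prodR r k := Finset.prod_nonneg fun j _ => (hD.r_pos j).le
    have := mul_lt_mul_of_pos_of_nonneg' hm2 (hD.R_le k) hD.R_pos hprod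
    rw [← pow_succ] at this
    linarith

/-- The level of a vertex of `X`; off `X` it is the junk value `sInf ∅ = 0`. -/
noncomputable def xLevelOf (n : ℕ → ℕ) (r : ℕ → ℝ) (R : ℝ) (w : List ℕ) : ℕ :=
  sInf {m | w ∈ XLevel n r R m}

theorem xLevelOf_eq (hD : MoranData d J n r R) {w : List ℕ} {m : ℕ}
    (hw : w ∈ XLevel n r R m) : xLevelOf n r R w = m :=
  eq_of_mem_xLevel hD (Nat.sInf_mem (s := {m | w ∈ XLevel n r R m}) ⟨m, hw⟩) hw

theorem exists_mem_xLevel_of_adj (M : MoranStructure d J n r) {a c : List ℕ}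
    (h : (AugGraph M R).Adj a c) :
    ∃ ma mc, a ∈ XLevel n r R ma ∧ c ∈ XLevel n r R mc ∧ mc ≤ ma + 1 := by
  rcases h with (⟨-, -, m, -, hc, ha⟩ | ⟨-, -, m, -, ha, hc⟩) | ⟨-, m, -, ha, hc, -⟩
  · exact ⟨m - 1, m, ha, hc, by omega⟩
  · exact ⟨m, m - 1, ha, hc, by omega⟩
  · exact ⟨m, m, ha, hc, by omega⟩

theorem IsWord.of_append {v t : List ℕ} (h : IsWord n (v ++ t)) : IsWord n v := fun j hj => by
  simpa [List.getElem_append_left hj] using h j (by simp; omega)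

theorem IsWord.last_le {v : List ℕ} {a : ℕ} (h : IsWord n (v ++ [a])) :
    1 ≤ a ∧ a ≤ n v.length := by
  simpa using h v.length (by simp)

theorem jset_append_subset (M : MoranStructure d J n r) {v : List ℕ} :
    ∀ {t : List ℕ}, IsWord n (v ++ t) → M.Jset (v ++ t) ⊆ M.Jset v := by
  intro t
  induction t using List.reverseRecOn with
  | nil => simp
  | append_singleton t a ih =>
    intro h
    rw [← List.append_assoc] at h ⊢
    obtain ⟨ha1, ha2⟩ := h.last_le
    exact (M.nested _ h.of_append a ha1 ha2).trans (ih h.of_append)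

theorem jset_nonempty (hD : MoranData d J n r R) (M : MoranStructure d J n r) {w : List ℕ}
    (h : IsWord n w) : (M.Jset w).Nonempty := by
  obtain ⟨S, -, -, -, hS⟩ := M.similar w h
  rw [hS]
  exact hD.int_nonempty.mono interior_subset |>.image S

theorem nonempty_inter_of_adj (hD : MoranData d J n r R) (M : MoranStructure d J n r)
    {a c : List ℕ} (h : (AugGraph M R).Adj a c) : (M.Jset a ∩ M.Jset c).Nonempty := by
  rcases h with (⟨-, ⟨t, rfl⟩, m, -, hc, -⟩ | ⟨-, ⟨t, rfl⟩, m, -, ha, -⟩) | ⟨-, -, -, -, -, hac⟩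
  · have hw := isWord_of_mem_xLevel hc
    obtain ⟨z, hz⟩ := jset_nonempty hD M hw
    exact ⟨z, jset_append_subset M hw hz, hz⟩
  · have hw := isWord_of_mem_xLevel ha
    obtain ⟨z, hz⟩ := jset_nonempty hD M hw
    exact ⟨z, hz, jset_append_subset M hw hz⟩
  · exact hac

theorem diam_jset (M : MoranStructure d J n r) :
    ∀ {w : List ℕ}, IsWord n w → diam (M.Jset w) = prodR r w.length * diam J := by
  intro w
  induction w using List.reverseRecOn with
  | nil => simp [M.root_eq, prodR]
  | append_singleton w a ih =>
    intro h
    obtain ⟨ha1, ha2⟩ := h.last_le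
    rw [M.diam_ratio w h.of_append a ha1 ha2, ih h.of_append, List.length_append,
      List.length_singleton, prodR, prodR, Finset.prod_range_succ]
    ring

theorem isBounded_jset (hD : MoranData d J n r R) (M : MoranStructure d J n r) {w : List ℕ}
    (h : IsWord n w) : Bornology.IsBounded (M.Jset w) := by
  obtain ⟨S, c, hc, hS, hw⟩ := M.similar w h
  obtain ⟨C, hC⟩ := Metric.isBounded_iff.1 hD.compact.isBounded
  rw [hw, Metric.isBounded_iff]
  refine ⟨c * C, ?_⟩
  rintro _ ⟨p, hp, rfl⟩ _ ⟨q, hq, rfl⟩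
  rw [hS]
  exact mul_le_mul_of_nonneg_left (hC hp hq) hc.le

theorem dist_le_of_mem_jset (hD : MoranData d J n r R) (M : MoranStructure d J n r)
    {w : List ℕ} {m : ℕ} (hw : w ∈ XLevel n r R m) {x y : Pt d} (hx : x ∈ M.Jset w)
    (hy : y ∈ M.Jset w) : dist x y ≤ diam J * R ^ m := by
  have hword := isWord_of_mem_xLevel hw
  calc dist x y ≤ diam (M.Jset w) := dist_le_diam_of_mem (isBounded_jset hD M hword) hx hy
    _ = prodR r w.length * diam J := diam_jset M hword
    _ ≤ R ^ m * diam J := by gcongr; exact prodR_le_pow_of_mem_xLevel hw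
    _ = diam J * R ^ m := mul_comm _ _

theorem MoranData.isShrinkingPieces (hD : MoranData d J n r R) (M : MoranStructure d J n r) :
    IsShrinkingPieces (AugGraph M R) (XV n r R) (xLevelOf n r R) M.Jset (diam J + 1) R where
  mem_of_adj a c h := by
    obtain ⟨-, mc, -, hc, -⟩ := exists_mem_xLevel_of_adj M h
    exact mem_iUnion.2 ⟨mc, hc⟩
  level_le_of_adj a c h := by
    obtain ⟨ma, mc, ha, hc, hle⟩ := exists_mem_xLevel_of_adj M h
    rwa [xLevelOf_eq hD ha, xLevelOf_eq hD hc]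
  nonempty_inter_of_adj a c h := nonempty_inter_of_adj hD M h
  dist_le a ha x hx y hy := by
    obtain ⟨m, hm⟩ := mem_iUnion.1 ha
    rw [xLevelOf_eq hD hm]
    have := dist_le_of_mem_jset hD M hm hx hy
    nlinarith [pow_pos hD.R_pos m]

end Moran

namespace IsRay

variable {d : ℕ} {J : Set (Pt d)} {n : ℕ → ℕ} {r : ℕ → ℝ} {R : ℝ} {u v : ℕ → List ℕ}

theorem mem_xV (hu : IsRay n r R u) (m : ℕ) : u m ∈ XV n r R := mem_iUnion.2 ⟨m, hu.1 m⟩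

theorem exists_walk (hu : IsRay n r R u) (M : MoranStructure d J n r) (m : ℕ) :
    ∃ p : (AugGraph M R).Walk [] (u m), p.length = m := by
  induction m with
  | zero => exact ⟨SimpleGraph.Walk.nil.copy rfl (mem_xLevel_zero.1 (hu.1 0)).symm, by simp⟩
  | succ m ih =>
    obtain ⟨p, hp⟩ := ih
    have hadj : (AugGraph M R).Adj (u m) (u (m + 1)) := Or.inl (Or.inl (hu.2 m))
    exact ⟨p.concat hadj, by rw [SimpleGraph.Walk.length_concat, hp]⟩

theorem dist_root (hu : IsRay n r R u) (hD : MoranData d J n r R) (M : MoranStructure d J n r)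
    (m : ℕ) : (AugGraph M R).dist [] (u m) = m := by
  obtain ⟨p, hp⟩ := hu.exists_walk M m
  obtain ⟨q, hq⟩ := SimpleGraph.Reachable.exists_walk_length_eq_dist ⟨p⟩
  have := (hD.isShrinkingPieces M).level_le_add_length q
  rw [xLevelOf_eq hD (hu.1 m), xLevelOf_eq hD (mem_xLevel_zero.2 rfl)] at this
  have := SimpleGraph.dist_le p
  omega

theorem xLevelOf_eq_dist (hu : IsRay n r R u) (hD : MoranData d J n r R)
    (M : MoranStructure d J n r) (m : ℕ) : xLevelOf n r R (u m) = (AugGraph M R).dist [] (u m) := by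
  rw [xLevelOf_eq hD (hu.1 m), hu.dist_root hD M]

theorem exists_walk_between (hu : IsRay n r R u) (hv : IsRay n r R v) (M : MoranStructure d J n r)
    (m : ℕ) : ∃ p : (AugGraph M R).Walk (u m) (v m), p.length = 2 * m := by
  obtain ⟨p, hp⟩ := hu.exists_walk M m
  obtain ⟨q, hq⟩ := hv.exists_walk M m
  exact ⟨p.reverse.append q, by simp [hp, hq]; ring⟩

theorem reachable (hu : IsRay n r R u) (hv : IsRay n r R v) (M : MoranStructure d J n r)
    (m : ℕ) : (AugGraph M R).Reachable (u m) (v m) :=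
  (hu.exists_walk_between hv M m).elim fun p _ => ⟨p⟩

theorem gromovD_nonneg (hu : IsRay n r R u) (hv : IsRay n r R v) (hD : MoranData d J n r R)
    (M : MoranStructure d J n r) (m : ℕ) : 0 ≤ gromovD (AugGraph M R) [] (u m) (v m) := by
  obtain ⟨p, hp⟩ := hu.exists_walk_between hv M m
  have := SimpleGraph.dist_le p
  rw [gromovD, hu.dist_root hD M, hv.dist_root hD M]
  have : ((AugGraph M R).dist (u m) (v m) : ℝ) ≤ 2 * m := by exact_mod_cast hp ▸ this
  linarith

end IsRay

end MoranPaper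

/-- there is `C > 0` such that `|Φ(ξ) - Φ(η)| ≤ C · r^{t(ξ,η)}` for all
geodesic rays `ξ, η`, where `t(ξ,η) = liminf_m ⟨u_m, v_m⟩` (with `r^∞ = 0`). -/
theorem MoranPaper.statement8 (d : ℕ) (J : Set (MoranPaper.Pt d)) (n : ℕ → ℕ) (r : ℕ → ℝ)
    (R : ℝ) (hD : MoranPaper.MoranData d J n r R) (M : MoranPaper.MoranStructure d J n r) :
    ∃ C : ℝ, 0 < C ∧ ∀ u v : ℕ → List ℕ,
      MoranPaper.IsRay n r R u → MoranPaper.IsRay n r R v →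
      ∀ x y : MoranPaper.Pt d,
        (⋂ m, M.Jset (u m)) = {x} → (⋂ m, M.Jset (v m)) = {y} →
        dist x y ≤ C * MoranPaper.rpowE R (MoranPaper.tLim (MoranPaper.AugGraph M R) [] u v) := by
  obtain ⟨C, hC, hbound⟩ := (hD.isShrinkingPieces M).exists_dist_le_mul_rpow_gromovD
    (by positivity) hD.R_pos hD.R_lt_one []
  refine ⟨C, hC, fun u v hu hv x y hx hy => ?_⟩
  refine le_mul_rpowE_liminf hD.R_pos hD.R_lt_one hC.le (hu.gromovD_nonneg hv hD M) fun m => ?_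
  exact hbound _ _ (hu.mem_xV m) (hu.reachable hv M m)
    (hu.xLevelOf_eq_dist hD M m) (hv.xLevelOf_eq_dist hD M m)
    x (mem_iInter.1 (hx.symm.subset rfl) m) y (mem_iInter.1 (hy.symm.subset rfl) m)
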